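/- arXiv:math/0604448 — 2 statements merged into one kernel-verified Lean document; each statement's English description precedes it below -/
import Mathlib

section
/- Let n ≥ 2. There exist constants c > 0 and 0 < r₀ < 1 depending only on n such that for all 0 < σ < 1/2 and all 0 < δ < 1 with δ^σ ≤ 1/2, δ^{1-σ} ≤ 1/40 and δ^{1-2σ} ≤ 1/80, the following holds: for every t of the form t = 2qδ^{-2σ} with q ∈ ℕ, q ≤ (1/80)δ^{2σ-1}, writing X = {pδ^{-σ} : p ∈ ℕ, p ≤ (1/40)δ^{σ-1}} and A_t = {x ∈ ℝ^{n-1} : dist(x, X^{n-1}) ≤ r₀}, one has ∫_{A_t} |u(x,t)|² dx ≥ c ‖F‖_{L²(ℝ^{n-1})}². In other words, the mass of |u(·,t)|² on the section of the neighbourhood of Λ at height t accounts for a positive proportion of the conserved L² mass. -/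
open Real MeasureTheory

/-- The function `g = ∑_{ℓ ∈ ℕ, 1 ≤ ℓ ≤ δ^{-σ}} χ_{(ℓδ^σ-δ, ℓδ^σ+δ)}` from Section 2. -/
noncomputable def g (δ σ : ℝ) (x : ℝ) : ℝ :=
  ∑ ℓ ∈ Finset.Icc 1 ⌊δ ^ (-σ)⌋₊,
    Set.indicator (Set.Ioo ((ℓ : ℝ) * δ ^ σ - δ) ((ℓ : ℝ) * δ ^ σ + δ)) (fun _ => (1 : ℝ)) x

/-- The solution `u(x,t) = ∫_{ℝ^{n-1}} e^{-πit|ξ|² + 2πi x·ξ} ∏_j g(ξ_j) dξ` of the free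
Schrödinger equation with Fourier data `F(ξ) = ∏_j g(ξ_j)`. -/
noncomputable def schrodingerSol (n : ℕ) (δ σ : ℝ)
    (x : EuclideanSpace ℝ (Fin (n-1))) (t : ℝ) : ℂ :=
  ∫ ξ : EuclideanSpace ℝ (Fin (n-1)),
    Complex.exp (((-(π * t * ‖ξ‖ ^ 2) + 2 * π * (inner ℝ x ξ : ℝ) : ℝ) : ℂ) * Complex.I)
      * ((∏ j, g δ σ (ξ j) : ℝ) : ℂ)

/-! The solution factorises, `u(x, t) = ∏ⱼ u₁(xⱼ, t)`, into one-dimensional evolutions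
`u₁(y, t) = ∫ e^{iφ(t, y, η)} g(η) dη`. For `t = 2qδ^{-2σ}` and `y` within `1/100` of a point
`pδ^{-σ}` of `X`, the phase on the interval of `g` around `ℓδ^σ` is `2π(pℓ - qℓ²)` up to an error
of at most `π/3`, so there is no cancellation: `Re u₁(y, t) ≥ ½‖g‖₁ = δ⌊δ^{-σ}⌋`. Hence
`|u(·, t)|² ≥ (δ⌊δ^{-σ}⌋)^{2(n-1)}` on the product of the `1/(100n)`-neighbourhoods of the
`⌊δ^{σ-1}/40⌋ + 1` points of `X`, a subset of `A_t` of volume `((⌊δ^{σ-1}/40⌋ + 1)/(50n))^{n-1}`,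
while `‖F‖₂² = (2δ⌊δ^{-σ}⌋)^{n-1}`; the product `δ⌊δ^{-σ}⌋(⌊δ^{σ-1}/40⌋ + 1)` is at least `1/80`. -/

namespace EuclideanSpace

variable {ι : Type*} [Fintype ι]

theorem integral_prod_apply {𝕜 : Type*} [RCLike 𝕜] (f : ι → ℝ → 𝕜) :
    ∫ ξ : EuclideanSpace ℝ ι, ∏ j, f j (ξ j) = ∏ j, ∫ s, f j s := by
  rw [← integral_fintype_prod_eq_prod f,
    ← (EuclideanSpace.volume_preserving_symm_measurableEquiv_toLp ι).symm.integral_comp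
      (MeasurableEquiv.measurableEmbedding _)]
  rfl

theorem volume_setOf_forall_mem (s : Set ℝ) :
    volume {x : EuclideanSpace ℝ ι | ∀ j, x j ∈ s} = volume s ^ Fintype.card ι := by
  rw [← Finset.card_univ, ← Finset.prod_const, ← volume_pi_pi,
    ← (EuclideanSpace.volume_preserving_symm_measurableEquiv_toLp ι).measure_preimage_equiv]
  congr 1 with x
  simp [Set.mem_pi]

theorem dist_le_sqrt_card_mul {x y : EuclideanSpace ℝ ι} {r : ℝ} (hr : 0 ≤ r)
    (h : ∀ j, |x j - y j| ≤ r) : dist x y ≤ √(Fintype.card ι) * r := by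
  rw [EuclideanSpace.dist_eq, ← sqrt_sq hr, ← sqrt_mul (Nat.cast_nonneg _)]
  gcongr
  calc ∑ j, dist (x j) (y j) ^ 2 ≤ ∑ _j : ι, r ^ 2 := by gcongr with j; exact h j
    _ = _ := by simp

end EuclideanSpace

theorem isCompact_setOf_infDist_le {E : Type*} [PseudoMetricSpace E] [ProperSpace E] {S : Set E}
    (hS : Bornology.IsBounded S) (hS0 : S.Nonempty) (r : ℝ) :
    IsCompact {x | Metric.infDist x S ≤ r} :=
  Metric.isCompact_of_isClosed_isBounded
    (isClosed_le (Metric.continuous_infDist_pt S) continuous_const)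
    ((hS.thickening (δ := r + 1)).subset fun _ hx =>
      (Metric.mem_thickening_iff_infDist_lt hS0).2 (by linarith [show _ ≤ r from hx]))

theorem measureReal_mul_le_setIntegral {X : Type*} [MeasurableSpace X] {μ : Measure X}
    {f : X → ℝ} {s t : Set X} {c : ℝ} (hst : s ⊆ t) (hs : MeasurableSet s) (hμs : μ s ≠ ⊤)
    (hf : IntegrableOn f t μ) (hf0 : 0 ≤ f) (hc : ∀ x ∈ s, c ≤ f x) :
    μ.real s * c ≤ ∫ x in t, f x ∂μ :=
  (setIntegral_ge_of_const_le hs hμs hc (hf.mono_set hst)).trans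
    (setIntegral_mono_set hf (.of_forall hf0) hst.eventuallyLE)

theorem pairwiseDisjoint_ball_nat_mul {B r : ℝ} (h : 2 * r ≤ B) (s : Set ℕ) :
    s.PairwiseDisjoint fun p : ℕ => Metric.ball ((p : ℝ) * B) r := by
  intro a _ b _ hab
  apply Metric.ball_disjoint_ball
  have : (1 : ℝ) ≤ |(a : ℝ) - b| := by
    exact_mod_cast Int.one_le_abs (sub_ne_zero.2 (Int.ofNat_inj.not.2 hab))
  rw [Real.dist_eq, ← sub_mul, abs_mul]
  nlinarith [abs_nonneg B, le_abs_self B]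

theorem pairwiseDisjoint_closedBall_nat_mul {B r : ℝ} (h : 2 * r < B) (s : Set ℕ) :
    s.PairwiseDisjoint fun p : ℕ => Metric.closedBall ((p : ℝ) * B) r := by
  obtain ⟨r', hr, hr'⟩ := exists_between (show r < B / 2 by linarith)
  exact (pairwiseDisjoint_ball_nat_mul (r := r') (by linarith) s).mono fun _ =>
    Metric.closedBall_subset_ball hr

theorem volume_biUnion_closedBall_nat_mul {B r : ℝ} (h : 2 * r < B) (N : ℕ) :
    volume (⋃ p ∈ Finset.range N, Metric.closedBall ((p : ℝ) * B) r) =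
      N * ENNReal.ofReal (2 * r) := by
  rw [measure_biUnion_finset (pairwiseDisjoint_closedBall_nat_mul h _)
    fun _ _ => measurableSet_closedBall]
  simp [Real.volume_closedBall]

section g

variable (δ σ : ℝ)

theorem g_nonneg (x : ℝ) : 0 ≤ g δ σ x :=
  Finset.sum_nonneg fun _ _ => Set.indicator_nonneg (fun _ _ => zero_le_one) x

theorem exists_mem_Ioo_of_g_ne_zero {x : ℝ} (hx : g δ σ x ≠ 0) :
    ∃ ℓ ∈ Finset.Icc 1 ⌊δ ^ (-σ)⌋₊, x ∈ Set.Ioo ((ℓ : ℝ) * δ ^ σ - δ) ((ℓ : ℝ) * δ ^ σ + δ) := by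
  by_contra! h
  exact hx (Finset.sum_eq_zero fun ℓ hℓ => Set.indicator_of_notMem (h ℓ hℓ) _)

theorem integrable_g : Integrable (g δ σ) :=
  integrable_finsetSum _ fun _ _ =>
    (integrable_indicator_iff measurableSet_Ioo).2 (integrableOn_const (by simp))

variable {δ}

theorem integral_g (hδ : 0 ≤ δ) : ∫ x, g δ σ x = ⌊δ ^ (-σ)⌋₊ * (2 * δ) := by
  unfold g
  rw [integral_finsetSum _ fun _ _ =>
    (integrable_indicator_iff measurableSet_Ioo).2 (integrableOn_const (by simp))]
  simp_rw [integral_indicator_const _ measurableSet_Ioo, Real.volume_real_Ioo]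
  simp [max_eq_left (by linarith : 0 ≤ δ + δ), two_mul, mul_add]

theorem g_sq (h2δ : 2 * δ ≤ δ ^ σ) (x : ℝ) : g δ σ x ^ 2 = g δ σ x := by
  have : g δ σ x =
      (⋃ ℓ ∈ Finset.Icc 1 ⌊δ ^ (-σ)⌋₊, Metric.ball ((ℓ : ℝ) * δ ^ σ) δ).indicator 1 x := by
    rw [Finset.indicator_biUnion_apply _ _ (pairwiseDisjoint_ball_nat_mul h2δ _)]
    simp only [g, Real.ball_eq_Ioo]
    rfl
  classical
  rw [this, Set.indicator_apply]
  split_ifs <;> simp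

theorem integral_prod_g_sq {ι : Type*} [Fintype ι] (hδ : 0 ≤ δ) (h2δ : 2 * δ ≤ δ ^ σ) :
    ∫ ξ : EuclideanSpace ℝ ι, (∏ j, g δ σ (ξ j)) ^ 2 =
      (⌊δ ^ (-σ)⌋₊ * (2 * δ)) ^ Fintype.card ι := by
  simp_rw [← Finset.prod_pow, g_sq σ h2δ]
  rw [EuclideanSpace.integral_prod_apply (fun _ => g δ σ), integral_g σ hδ, Finset.prod_const,
    Finset.card_univ]

end g

noncomputable def schrodingerPhase (t y η : ℝ) : ℝ := -(π * t * η ^ 2) + 2 * π * (y * η)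

noncomputable def schrodingerSol₁ (f : ℝ → ℝ) (t y : ℝ) : ℂ :=
  ∫ η, Complex.exp (schrodingerPhase t y η * Complex.I) * f η

theorem schrodingerSol_eq_prod (n : ℕ) (δ σ t : ℝ) (x : EuclideanSpace ℝ (Fin (n - 1))) :
    schrodingerSol n δ σ x t = ∏ j, schrodingerSol₁ (g δ σ) t (x j) := by
  unfold schrodingerSol schrodingerSol₁ schrodingerPhase
  rw [← EuclideanSpace.integral_prod_apply]
  congr 1 with ξ
  have hnorm : ‖ξ‖ ^ 2 = ∑ j, ξ j ^ 2 := by simp [EuclideanSpace.norm_sq_eq]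
  have hinner : inner ℝ x ξ = ∑ j, x j * ξ j := by simp [PiLp.inner_apply, mul_comm]
  rw [hnorm, hinner, Finset.prod_mul_distrib, ← Complex.exp_sum, ← Finset.sum_mul,
    ← Complex.ofReal_sum, Complex.ofReal_prod, Finset.mul_sum, Finset.mul_sum,
    ← Finset.sum_neg_distrib, ← Finset.sum_add_distrib]

section schrodingerSol₁

variable {f : ℝ → ℝ} (t y : ℝ)

theorem norm_schrodingerIntegrand (η : ℝ) :
    ‖Complex.exp (schrodingerPhase t y η * Complex.I) * f η‖ = |f η| := by
  rw [norm_mul, Complex.norm_exp_ofReal_mul_I, one_mul, Complex.norm_real, Real.norm_eq_abs]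

theorem re_schrodingerIntegrand (η : ℝ) :
    (Complex.exp (schrodingerPhase t y η * Complex.I) * f η).re =
      cos (schrodingerPhase t y η) * f η := by
  rw [Complex.re_mul_ofReal, Complex.exp_ofReal_mul_I_re]

theorem integrable_schrodingerIntegrand (hf : Integrable f) :
    Integrable fun η => Complex.exp (schrodingerPhase t y η * Complex.I) * f η := by
  refine hf.norm.mono' ?_ (.of_forall fun η => (norm_schrodingerIntegrand t y η).le)
  exact (Continuous.aestronglyMeasurable (by unfold schrodingerPhase; fun_prop)).mul
    (Complex.continuous_ofReal.comp_aestronglyMeasurable hf.aestronglyMeasurable)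

theorem continuous_schrodingerSol₁ (hf : Integrable f) : Continuous (schrodingerSol₁ f t) := by
  refine continuous_of_dominated (bound := fun η => |f η|)
    (fun y => (integrable_schrodingerIntegrand t y hf).aestronglyMeasurable)
    (fun y => .of_forall fun η => (norm_schrodingerIntegrand t y η).le) hf.abs
    (.of_forall fun η => ?_)
  unfold schrodingerPhase
  fun_prop

theorem re_schrodingerSol₁ (hf : Integrable f) :
    (schrodingerSol₁ f t y).re = ∫ η, cos (schrodingerPhase t y η) * f η := by
  rw [schrodingerSol₁, ← RCLike.re_to_complex,
    ← integral_re (integrable_schrodingerIntegrand t y hf)]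
  simp only [RCLike.re_to_complex, re_schrodingerIntegrand]

theorem half_integral_le_re_schrodingerSol₁ (hf : Integrable f) (hf0 : 0 ≤ f)
    (hcos : ∀ η, f η ≠ 0 → 1 / 2 ≤ cos (schrodingerPhase t y η)) :
    1 / 2 * ∫ η, f η ≤ (schrodingerSol₁ f t y).re := by
  rw [re_schrodingerSol₁ t y hf, ← integral_const_mul]
  refine integral_mono (hf.const_mul _) ?_ fun η => ?_
  · simpa only [RCLike.re_to_complex, re_schrodingerIntegrand]
      using (integrable_schrodingerIntegrand t y hf).re
  · rcases eq_or_ne (f η) 0 with h | h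
    · simp [h]
    · exact mul_le_mul_of_nonneg_right (hcos η h) (hf0 η)

end schrodingerSol₁

theorem continuous_schrodingerSol (n : ℕ) (δ σ t : ℝ) :
    Continuous fun x => schrodingerSol n δ σ x t := by
  simp_rw [schrodingerSol_eq_prod]
  exact continuous_finsetProd _ fun j _ =>
    (continuous_schrodingerSol₁ t (integrable_g δ σ)).comp (PiLp.continuous_apply 2 _ j)

/-- Writing `η = ℓ / B + e` and `y = p B + d`, the phase is `2π(pℓ - qℓ²)` plus `2π` times an
error of size `O(q B² δ + p B δ + |d|)`. -/
theorem half_le_cos_schrodingerPhase {B δ η y : ℝ} {p q ℓ : ℕ} (hB : 0 < B) (hδ : δ ≤ 1)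
    (hℓ : ℓ ≤ B) (hq : q * B ^ 2 * δ ≤ 1 / 80) (hp : p * B * δ ≤ 1 / 40)
    (hη : |η - ℓ / B| ≤ δ) (hy : |y - p * B| ≤ 1 / 100) :
    1 / 2 ≤ cos (schrodingerPhase (2 * q * B ^ 2) y η) := by
  obtain ⟨e, rfl⟩ : ∃ e, η = ℓ / B + e := ⟨η - ℓ / B, by ring⟩
  obtain ⟨d, rfl⟩ : ∃ d, y = p * B + d := ⟨y - p * B, by ring⟩
  rw [add_sub_cancel_left] at hη hy
  have hphase : schrodingerPhase (2 * q * B ^ 2) (p * B + d) (ℓ / B + e) =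
      2 * π * (p * B * e + d * (ℓ / B + e) - 2 * q * ℓ * B * e - q * B ^ 2 * e ^ 2) +
        ((p * ℓ - q * ℓ ^ 2 : ℤ) : ℝ) * (2 * π) := by
    unfold schrodingerPhase
    push_cast
    field_simp
    ring
  have hδ0 : 0 ≤ δ := (abs_nonneg _).trans hη
  have hℓB : 0 ≤ (ℓ : ℝ) / B ∧ (ℓ : ℝ) / B ≤ 1 := ⟨by positivity, div_le_one_of_le₀ hℓ hB.le⟩
  have hηabs : |ℓ / B + e| ≤ 2 := by
    grw [abs_add_le, abs_of_nonneg hℓB.1, hℓB.2, hη, hδ]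
    norm_num
  have h1 : |p * B * e| ≤ 1 / 40 := by
    rw [abs_mul, abs_of_nonneg (by positivity)]
    grw [hη, hp]
  have h2 : |d * (ℓ / B + e)| ≤ 1 / 50 := by
    rw [abs_mul]
    grw [hy, hηabs]
    norm_num
  have h3 : |2 * q * ℓ * B * e| ≤ 1 / 40 := by
    rw [abs_mul, abs_of_nonneg (by positivity)]
    grw [hη, hℓ]
    linarith
  have h4 : |q * B ^ 2 * e ^ 2| ≤ 1 / 80 := by
    rw [abs_mul, abs_of_nonneg (by positivity), abs_pow]
    grw [hη, show δ ^ 2 ≤ δ by nlinarith]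
    linarith
  have hR : |2 * π * (p * B * e + d * (ℓ / B + e) - 2 * q * ℓ * B * e - q * B ^ 2 * e ^ 2)|
      ≤ π / 3 := by
    rw [abs_mul, abs_of_pos (by positivity)]
    grw [abs_sub, abs_sub, abs_add_le, h1, h2, h3, h4]
    linarith [pi_pos]
  rw [hphase, cos_add_int_mul_two_pi, ← cos_abs, ← cos_pi_div_three]
  exact cos_le_cos_of_nonneg_of_le_pi (abs_nonneg _) (by linarith [pi_pos]) hR

theorem mul_floor_le_norm_schrodingerSol₁ {δ σ y : ℝ} {p q : ℕ} (hδ0 : 0 < δ) (hδ1 : δ ≤ 1)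
    (hq : (q : ℝ) ≤ 1 / 80 * δ ^ (2 * σ - 1)) (hp : (p : ℝ) ≤ 1 / 40 * δ ^ (σ - 1))
    (hy : |y - p * δ ^ (-σ)| ≤ 1 / 100) :
    δ * ⌊δ ^ (-σ)⌋₊ ≤ ‖schrodingerSol₁ (g δ σ) (2 * q * δ ^ (-(2 * σ))) y‖ := by
  set B := δ ^ (-σ) with hB
  have hB0 : 0 < B := rpow_pos_of_pos hδ0 _
  have hB2 : δ ^ (-(2 * σ)) = B ^ 2 := by
    rw [hB, ← rpow_natCast, ← rpow_mul hδ0.le]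
    ring_nf
  have hσ : δ ^ σ = B⁻¹ := by rw [hB, rpow_neg hδ0.le, inv_inv]
  have hqB : q * B ^ 2 * δ ≤ 1 / 80 := by
    grw [hq, ← hB2, mul_assoc, mul_assoc, ← rpow_add_one hδ0.ne', ← rpow_add hδ0]
    norm_num
  have hpB : p * B * δ ≤ 1 / 40 := by
    grw [hp, hB, mul_assoc, mul_assoc, ← rpow_add_one hδ0.ne', ← rpow_add hδ0]
    norm_num
  have hcos : ∀ η, g δ σ η ≠ 0 →
      1 / 2 ≤ cos (schrodingerPhase (2 * q * δ ^ (-(2 * σ))) y η) := by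
    intro η hη
    obtain ⟨ℓ, hℓ, hηℓ⟩ := exists_mem_Ioo_of_g_ne_zero δ σ hη
    rw [hσ, ← div_eq_mul_inv] at hηℓ
    rw [hB2]
    refine half_le_cos_schrodingerPhase (ℓ := ℓ) hB0 hδ1 ?_ hqB hpB
      (abs_sub_le_iff.2 ⟨?_, ?_⟩) hy
    · exact (Nat.cast_le.2 (Finset.mem_Icc.1 hℓ).2).trans (Nat.floor_le hB0.le)
    all_goals linarith [hηℓ.1, hηℓ.2]
  calc δ * ⌊B⌋₊ = 1 / 2 * ∫ η, g δ σ η := by rw [integral_g σ hδ0.le]; ring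
    _ ≤ (schrodingerSol₁ (g δ σ) (2 * q * δ ^ (-(2 * σ))) y).re :=
      half_integral_le_re_schrodingerSol₁ _ _ (integrable_g δ σ) (g_nonneg δ σ) hcos
    _ ≤ _ := Complex.re_le_norm _

theorem pow_le_norm_schrodingerSol (n : ℕ) {δ σ : ℝ} {q : ℕ} (hδ0 : 0 < δ) (hδ1 : δ ≤ 1)
    (hq : (q : ℝ) ≤ 1 / 80 * δ ^ (2 * σ - 1)) {x : EuclideanSpace ℝ (Fin (n - 1))}
    (hx : ∀ j, ∃ p : ℕ, (p : ℝ) ≤ 1 / 40 * δ ^ (σ - 1) ∧ |x j - p * δ ^ (-σ)| ≤ 1 / 100) :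
    (δ * ⌊δ ^ (-σ)⌋₊) ^ (n - 1) ≤ ‖schrodingerSol n δ σ x (2 * q * δ ^ (-(2 * σ)))‖ := by
  rw [schrodingerSol_eq_prod, norm_prod]
  calc (δ * ⌊δ ^ (-σ)⌋₊) ^ (n - 1) = ∏ _j : Fin (n - 1), δ * ⌊δ ^ (-σ)⌋₊ := by simp
    _ ≤ _ := Finset.prod_le_prod (fun _ _ => by positivity) fun j _ => by
      obtain ⟨p, hp, hxp⟩ := hx j
      exact mul_floor_le_norm_schrodingerSol₁ hδ0 hδ1 hq hp hxp

/-- The mass is bounded below on the product `P` of the `r`-neighbourhoods of the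
`⌊δ^{σ-1}/40⌋ + 1` points of `X`, which lies inside the `√(n-1) r`-neighbourhood of `X^{n-1}`. -/
theorem pow_le_setIntegral_norm_sq_schrodingerSol (n : ℕ) {δ σ r r₀ : ℝ} {q : ℕ} (hδ0 : 0 < δ)
    (hδ1 : δ ≤ 1) (hq : (q : ℝ) ≤ 1 / 80 * δ ^ (2 * σ - 1)) (hr : 0 ≤ r) (hr1 : r ≤ 1 / 100)
    (hrB : 2 * r < δ ^ (-σ)) (hr₀ : √(n - 1 : ℕ) * r ≤ r₀) :
    ((δ * ⌊δ ^ (-σ)⌋₊) ^ 2 * ((⌊1 / 40 * δ ^ (σ - 1)⌋₊ + 1) * (2 * r))) ^ (n - 1) ≤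
      ∫ x in {x : EuclideanSpace ℝ (Fin (n - 1)) |
          Metric.infDist x {y : EuclideanSpace ℝ (Fin (n - 1)) |
            ∀ j, ∃ p : ℕ, (p : ℝ) ≤ 1 / 40 * δ ^ (σ - 1) ∧ y j = p * δ ^ (-σ)} ≤ r₀},
        ‖schrodingerSol n δ σ x (2 * q * δ ^ (-(2 * σ)))‖ ^ 2 := by
  set B := δ ^ (-σ)
  set M := 1 / 40 * δ ^ (σ - 1)
  set S := {y : EuclideanSpace ℝ (Fin (n - 1)) | ∀ j, ∃ p : ℕ, (p : ℝ) ≤ M ∧ y j = p * B}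
  set I := ⋃ p ∈ Finset.range (⌊M⌋₊ + 1), Metric.closedBall ((p : ℝ) * B) r
  set P := {x : EuclideanSpace ℝ (Fin (n - 1)) | ∀ j, x j ∈ I}
  have hB0 : 0 < B := rpow_pos_of_pos hδ0 _
  have hM0 : 0 ≤ M := by positivity
  have hP : ∀ x ∈ P, ∀ j, ∃ p : ℕ, (p : ℝ) ≤ M ∧ |x j - p * B| ≤ r := by
    intro x hx j
    obtain ⟨p, hp, hxp⟩ := Set.mem_iUnion₂.1 (hx j)
    exact ⟨p, (Nat.cast_le.2 (Nat.lt_succ_iff.1 (Finset.mem_range.1 hp))).trans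
      (Nat.floor_le hM0), hxp⟩
  have hPA : P ⊆ {x | Metric.infDist x S ≤ r₀} := fun x hx => by
    choose p hpM hxp using hP x hx
    refine (Metric.infDist_le_dist_of_mem (y := WithLp.toLp 2 fun j => p j * B)
      fun j => ⟨p j, hpM j, rfl⟩).trans ((EuclideanSpace.dist_le_sqrt_card_mul hr hxp).trans ?_)
    simpa using hr₀
  have hS : Bornology.IsBounded S := by
    refine (Metric.isBounded_iff_subset_closedBall 0).2 ⟨_, fun y hy =>
      Metric.mem_closedBall.2 (EuclideanSpace.dist_le_sqrt_card_mul (r := M * B) (by positivity)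
        fun j => ?_)⟩
    obtain ⟨p, hp, hyp⟩ := hy j
    rw [hyp, PiLp.zero_apply, sub_zero, abs_of_nonneg (by positivity)]
    gcongr
  have hint : IntegrableOn (fun x => ‖schrodingerSol n δ σ x (2 * q * δ ^ (-(2 * σ)))‖ ^ 2)
      {x | Metric.infDist x S ≤ r₀} :=
    ((continuous_schrodingerSol n δ σ _).norm.pow 2).continuousOn.integrableOn_compact
      (isCompact_setOf_infDist_le hS ⟨0, fun _ => ⟨0, by simp [hM0]⟩⟩ r₀)
  have hvol : volume P = ((⌊M⌋₊ + 1 : ℕ) * ENNReal.ofReal (2 * r)) ^ (n - 1) := by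
    rw [EuclideanSpace.volume_setOf_forall_mem, volume_biUnion_closedBall_nat_mul hrB,
      Fintype.card_fin]
  have hPmeas : MeasurableSet P := by
    simp only [P, Set.ofPred_forall]
    exact MeasurableSet.iInter fun j => (PiLp.continuous_apply 2 _ j).measurable
      (Finset.measurableSet_biUnion _ fun _ _ => measurableSet_closedBall)
  calc _ = ((⌊M⌋₊ + 1) * (2 * r)) ^ (n - 1) * ((δ * ⌊B⌋₊) ^ (n - 1)) ^ 2 := by
        rw [mul_pow, ← pow_mul, ← pow_mul, mul_comm 2, mul_comm]
    _ = volume.real P * ((δ * ⌊B⌋₊) ^ (n - 1)) ^ 2 := by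
        rw [measureReal_def, hvol, ENNReal.toReal_pow, ENNReal.toReal_mul,
          ENNReal.toReal_natCast, ENNReal.toReal_ofReal (by positivity)]
        push_cast
        rfl
    _ ≤ _ := measureReal_mul_le_setIntegral hPA hPmeas (by rw [hvol]; finiteness) hint
        (fun _ => by positivity) fun x hx => pow_le_pow_left₀ (by positivity)
          (pow_le_norm_schrodingerSol n hδ0 hδ1 hq fun j => ?_) 2
  obtain ⟨p, hp, hxp⟩ := hP x hx j
  exact ⟨p, hp, hxp.trans hr1⟩

theorem two_le_rpow_neg {δ σ : ℝ} (hδ0 : 0 < δ) (hσ : δ ^ σ ≤ 1 / 2) : 2 ≤ δ ^ (-σ) := by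
  rw [rpow_neg hδ0.le, ← one_div, le_div_iff₀ (rpow_pos_of_pos hδ0 σ)]
  linarith

theorem one_div_eighty_le_mul_floor_mul_floor_add_one {δ σ : ℝ} (hδ0 : 0 < δ)
    (hσ : δ ^ σ ≤ 1 / 2) :
    1 / 80 ≤ δ * ⌊δ ^ (-σ)⌋₊ * (⌊1 / 40 * δ ^ (σ - 1)⌋₊ + 1) := by
  have hL : δ ^ (-σ) / 2 ≤ ⌊δ ^ (-σ)⌋₊ := by
    linarith [Nat.lt_floor_add_one (δ ^ (-σ)), two_le_rpow_neg hδ0 hσ]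
  calc 1 / 80 = δ ^ (-σ) * δ ^ (σ - 1) * δ / 80 := by
        rw [← rpow_add hδ0, ← rpow_add_one hδ0.ne', show -σ + (σ - 1) + 1 = 0 by ring, rpow_zero]
    _ = δ * (δ ^ (-σ) / 2) * (1 / 40 * δ ^ (σ - 1)) := by ring
    _ ≤ _ := by
        gcongr
        exact (Nat.lt_floor_add_one _).le

theorem stmt8_general (n : ℕ) :
    ∃ c r₀ : ℝ, 0 < c ∧ 0 < r₀ ∧ r₀ < 1 ∧
      ∀ σ δ : ℝ, 0 < σ → σ < 1/2 → 0 < δ → δ < 1 →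
        δ ^ σ ≤ 1/2 → δ ^ (1 - σ) ≤ 1/40 → δ ^ (1 - 2*σ) ≤ 1/80 →
      ∀ q : ℕ, (q : ℝ) ≤ (1/80) * δ ^ (2*σ - 1) →
      ∀ t : ℝ, t = 2 * (q : ℝ) * δ ^ (-(2*σ)) →
        c * (∫ ξ : EuclideanSpace ℝ (Fin (n-1)), (∏ j, g δ σ (ξ j)) ^ 2) ≤
          ∫ x in {x : EuclideanSpace ℝ (Fin (n-1)) |
              Metric.infDist x {y : EuclideanSpace ℝ (Fin (n-1)) |
                ∀ j, ∃ p : ℕ, (p : ℝ) ≤ (1/40) * δ ^ (σ - 1) ∧ y j = (p : ℝ) * δ ^ (-σ)} ≤ r₀},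
            ‖schrodingerSol n δ σ x t‖ ^ 2 := by
  set m := n - 1
  set r : ℝ := 1 / (100 * (m + 1))
  have hr0 : 0 < r := by positivity
  have hr : r ≤ 1 / 100 := one_div_le_one_div_of_le (by norm_num) (by simp)
  have hr₀ : √m * r ≤ 1 / 2 := by
    have : √m ≤ m + 1 := sqrt_le_iff.2 ⟨by positivity, by nlinarith⟩
    rw [mul_one_div, div_le_iff₀ (by positivity)]
    linarith
  refine ⟨(r / 80) ^ m, 1 / 2, by positivity, by norm_num, by norm_num, ?_⟩
  intro σ δ _ _ hδ0 hδ1 hσ h40 _ q hq t ht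
  have h2δ : 2 * δ ≤ δ ^ σ := by
    have : δ = δ ^ (1 - σ) * δ ^ σ := by rw [← rpow_add hδ0, sub_add_cancel, rpow_one]
    nlinarith [rpow_pos_of_pos hδ0 σ]
  rw [integral_prod_g_sq σ hδ0.le h2δ, Fintype.card_fin, ht, ← mul_pow]
  refine le_trans ?_ (pow_le_setIntegral_norm_sq_schrodingerSol n hδ0 hδ1.le hq hr0.le hr
    (by linarith [two_le_rpow_neg hδ0 hσ]) hr₀)
  gcongr ?_ ^ _
  calc _ = 2 * δ * ⌊δ ^ (-σ)⌋₊ * r * (1 / 80) := by ring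
    _ ≤ 2 * δ * ⌊δ ^ (-σ)⌋₊ * r * (δ * ⌊δ ^ (-σ)⌋₊ * (⌊1 / 40 * δ ^ (σ - 1)⌋₊ + 1)) := by
        gcongr
        exact one_div_eighty_le_mul_floor_mul_floor_add_one hδ0 hσ
    _ = _ := by ring

/-- For `n ≥ 2` there are `c > 0` and `0 < r₀ < 1` depending only on `n`
such that for admissible `σ, δ` and every time `t = 2qδ^{-2σ}` of the lattice, the mass of
`|u(·,t)|²` on the `r₀`-neighbourhood of `X^{n-1}` is at least `c‖F‖₂²`. -/
theorem stmt8 (n : ℕ) (hn : 2 ≤ n) :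
    ∃ c r₀ : ℝ, 0 < c ∧ 0 < r₀ ∧ r₀ < 1 ∧
      ∀ σ δ : ℝ, 0 < σ → σ < 1/2 → 0 < δ → δ < 1 →
        δ ^ σ ≤ 1/2 → δ ^ (1 - σ) ≤ 1/40 → δ ^ (1 - 2*σ) ≤ 1/80 →
      ∀ q : ℕ, (q : ℝ) ≤ (1/80) * δ ^ (2*σ - 1) →
      ∀ t : ℝ, t = 2 * (q : ℝ) * δ ^ (-(2*σ)) →
        c * (∫ ξ : EuclideanSpace ℝ (Fin (n-1)), (∏ j, g δ σ (ξ j)) ^ 2) ≤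
          ∫ x in {x : EuclideanSpace ℝ (Fin (n-1)) |
              Metric.infDist x {y : EuclideanSpace ℝ (Fin (n-1)) |
                ∀ j, ∃ p : ℕ, (p : ℝ) ≤ (1/40) * δ ^ (σ - 1) ∧ y j = (p : ℝ) * δ ^ (-σ)} ≤ r₀},
            ‖schrodingerSol n δ σ x t‖ ^ 2 :=
  stmt8_general n
end

section
/- Let n ≥ 2, α > 0 and 1 ≤ p ≤ n/α, and let 0 < δ < 1. Let T = [0, δ^{-1}]^{n-1} × [0, δ^{-2}] ⊆ ℝⁿ and V = χ_T. Then there exist constants c, C > 0 depending only on n, α and p such that: if 1/p ≥ α/(n-1) then c δ^{-α} ≤ ‖V‖_{𝓛^{α,p}} ≤ C δ^{-α}, while if 1/p ≤ α/(n-1) then c δ^{-2α + (n-1)/p} ≤ ‖V‖_{𝓛^{α,p}} ≤ C δ^{-2α + (n-1)/p}. -/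
/-!
For the indicator of a measurable set `E`, the Morrey quantity of a ball `B(x, r)` is
`(r ^ (α p - n) |E ∩ B(x, r)|) ^ (1/p)`. For the upper bound, `T ∩ B(x, r)` lies in a box with
sides `min (a j) (2 r)`, and `min a (2 r) ≤ a ^ (1 - t) (2 r) ^ t` for `t ∈ [0, 1]`; exponents `t j`
summing to `n - α p` make the bound independent of `r`. If `α p ≤ n - 1` they can all be spent on
the `n - 1` short sides, which gives `δ ^ (-α)`; otherwise the short sides are used up and the
long side `δ⁻²` takes the rest, which gives `δ ^ (-2α + (n-1)/p)`. The matching lower bounds come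
from the ball of radius `δ⁻¹/2` inside `T` and from a ball of radius `n δ⁻²` containing `T`.
-/

open Real MeasureTheory ENNReal

/-- The Morrey–Campanato norm
`‖V‖_{𝓛^{α,p}} = sup_{x,r>0} r^α (r^{-n} ∫_{B(x,r)} V^p)^{1/p}` (valued in `ℝ≥0∞`). -/
noncomputable def morreyNorm (n : ℕ) (α p : ℝ) (V : EuclideanSpace ℝ (Fin n) → ℝ) : ℝ≥0∞ :=
  ⨆ (x : EuclideanSpace ℝ (Fin n)) (r : ℝ) (_ : 0 < r),
    ENNReal.ofReal (r ^ α) *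
      (ENNReal.ofReal (r ^ (-(n : ℝ))) *
        ∫⁻ y in Metric.ball x r, ENNReal.ofReal (V y ^ p)) ^ (1/p)

open Metric

lemma min_le_rpow_mul_rpow {a b t : ℝ} (ha : 0 ≤ a) (hb : 0 ≤ b) (ht0 : 0 ≤ t) (ht1 : t ≤ 1) :
    min a b ≤ a ^ (1 - t) * b ^ t := by
  calc min a b = min a b ^ (1 - t) * min a b ^ t := by
        rw [← rpow_add' (le_min ha hb) (by simp), sub_add_cancel, Real.rpow_one]
    _ ≤ a ^ (1 - t) * b ^ t :=
        mul_le_mul (rpow_le_rpow (le_min ha hb) (min_le_left a b) (by linarith))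
          (rpow_le_rpow (le_min ha hb) (min_le_right a b) ht0) (by positivity) (by positivity)

lemma prod_ite_val_lt_sub_one {M : Type*} [CommMonoid M] {n : ℕ} (hn : 1 ≤ n) (u v : M) :
    ∏ j : Fin n, (if (j : ℕ) < n - 1 then u else v) = u ^ (n - 1) * v := by
  obtain ⟨k, rfl⟩ : ∃ k, n = k + 1 := ⟨n - 1, by omega⟩
  simp [Fin.prod_univ_castSucc]

lemma sum_ite_val_lt_sub_one {M : Type*} [AddCommMonoid M] {n : ℕ} (hn : 1 ≤ n) (u v : M) :
    ∑ j : Fin n, (if (j : ℕ) < n - 1 then u else v) = (n - 1) • u + v := by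
  obtain ⟨k, rfl⟩ : ∃ k, n = k + 1 := ⟨n - 1, by omega⟩
  simp [Fin.sum_univ_castSucc]

section Morrey

variable {n : ℕ} {α p : ℝ}

lemma ofReal_rpow_mul_ofReal_rpow_mul (hp : 0 < p) {r w : ℝ} (hr : 0 < r) (hw : 0 ≤ w) :
    ENNReal.ofReal (r ^ α) * (ENNReal.ofReal (r ^ (-(n : ℝ))) * ENNReal.ofReal w) ^ (1 / p)
      = ENNReal.ofReal ((r ^ (α * p - n) * w) ^ (1 / p)) := by
  rw [← ENNReal.ofReal_mul (by positivity), ENNReal.ofReal_rpow_of_nonneg (by positivity)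
    (by positivity), ← ENNReal.ofReal_mul (by positivity)]
  congr 1
  rw [sub_eq_add_neg, rpow_add hr, mul_assoc, mul_rpow (x := r ^ (α * p)) (by positivity)
    (by positivity), ← rpow_mul hr.le, mul_one_div, mul_div_cancel_right₀ α hp.ne']

lemma setLIntegral_ofReal_indicator_one_rpow (hp : 0 < p) {E : Set (EuclideanSpace ℝ (Fin n))}
    (hE : MeasurableSet E) (B : Set (EuclideanSpace ℝ (Fin n))) :
    ∫⁻ y in B, ENNReal.ofReal (E.indicator (fun _ => (1 : ℝ)) y ^ p) = volume (E ∩ B) := by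
  have h : (fun y => ENNReal.ofReal (E.indicator (fun _ => (1 : ℝ)) y ^ p)) = E.indicator 1 := by
    ext y
    by_cases hy : y ∈ E <;> simp [hy, zero_rpow hp.ne']
  rw [h, lintegral_indicator_one hE, Measure.restrict_apply hE]

theorem morreyNorm_indicator_le (hp : 0 < p) {E : Set (EuclideanSpace ℝ (Fin n))}
    (hE : MeasurableSet E) {C : ℝ} (hC : 0 ≤ C)
    (h : ∀ x r, 0 < r → volume (E ∩ ball x r) ≤ ENNReal.ofReal (C ^ p * r ^ (n - α * p))) :
    morreyNorm n α p (E.indicator fun _ => 1) ≤ ENNReal.ofReal C := by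
  refine iSup₂_le fun x r => iSup_le fun hr => ?_
  rw [setLIntegral_ofReal_indicator_one_rpow hp hE]
  calc _ ≤ ENNReal.ofReal (r ^ α) * (ENNReal.ofReal (r ^ (-(n : ℝ))) *
          ENNReal.ofReal (C ^ p * r ^ (n - α * p))) ^ (1 / p) := by gcongr; exact h x r hr
    _ = ENNReal.ofReal C := by
      rw [ofReal_rpow_mul_ofReal_rpow_mul hp hr (by positivity), mul_left_comm,
        ← rpow_add hr, show α * p - n + (n - α * p) = 0 by ring, Real.rpow_zero, mul_one,
        ← rpow_mul hC, mul_one_div_cancel hp.ne', Real.rpow_one]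

theorem ofReal_le_morreyNorm_indicator (hp : 0 < p) {E : Set (EuclideanSpace ℝ (Fin n))}
    (hE : MeasurableSet E) (x : EuclideanSpace ℝ (Fin n)) {r w : ℝ} (hr : 0 < r) (hw : 0 ≤ w)
    (h : ENNReal.ofReal w ≤ volume (E ∩ ball x r)) :
    ENNReal.ofReal ((r ^ (α * p - n) * w) ^ (1 / p))
      ≤ morreyNorm n α p (E.indicator fun _ => 1) := by
  refine le_iSup_of_le x (le_iSup_of_le r (le_iSup_of_le hr ?_))
  rw [setLIntegral_ofReal_indicator_one_rpow hp hE, ← ofReal_rpow_mul_ofReal_rpow_mul hp hr hw]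
  gcongr

theorem ofReal_le_morreyNorm_indicator_of_ball_subset (hp : 0 < p)
    {E : Set (EuclideanSpace ℝ (Fin n))} (hE : MeasurableSet E) {x : EuclideanSpace ℝ (Fin n)}
    {ρ : ℝ} (hρ : 0 < ρ) (h : ball x ρ ⊆ E) :
    ENNReal.ofReal (ρ ^ α * (volume (ball (0 : EuclideanSpace ℝ (Fin n)) 1)).toReal ^ (1 / p))
      ≤ morreyNorm n α p (E.indicator fun _ => 1) := by
  set ω := (volume (ball (0 : EuclideanSpace ℝ (Fin n)) 1)).toReal
  have hvol : volume (E ∩ ball x ρ) = ENNReal.ofReal (ρ ^ n * ω) := by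
    rw [Set.inter_eq_right.mpr h, Measure.addHaar_ball_of_pos _ _ hρ, finrank_euclideanSpace_fin,
      ENNReal.ofReal_mul (by positivity), ENNReal.ofReal_toReal measure_ball_lt_top.ne]
  convert ofReal_le_morreyNorm_indicator hp hE x hρ (by positivity) hvol.ge using 2
  rw [← mul_assoc, ← Real.rpow_natCast, ← rpow_add hρ, sub_add_cancel,
    mul_rpow (by positivity) (by positivity), ← Real.rpow_mul hρ.le, mul_one_div,
    mul_div_cancel_right₀ α hp.ne']

end Morrey

section CoordBox

variable {n : ℕ}

def coordBox (a : Fin n → ℝ) : Set (EuclideanSpace ℝ (Fin n)) :=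
  {z | ∀ j, z j ∈ Set.Icc 0 (a j)}

lemma volume_setOf_forall_apply_mem (I : Fin n → Set ℝ) :
    volume {z : EuclideanSpace ℝ (Fin n) | ∀ j, z j ∈ I j} = ∏ j, volume (I j) := by
  rw [← volume_pi_pi, ← (EuclideanSpace.volume_preserving_symm_measurableEquiv_toLp
    (Fin n)).measure_preimage_equiv]
  congr 1
  ext z
  simp [MeasurableEquiv.coe_toLp_symm, Set.mem_pi]

lemma measurableSet_coordBox (a : Fin n → ℝ) : MeasurableSet (coordBox a) := by
  simp only [coordBox, Set.ofPred_forall]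
  exact MeasurableSet.iInter fun j => measurableSet_Icc.preimage (by fun_prop)

lemma volume_coordBox {a : Fin n → ℝ} (ha : ∀ j, 0 ≤ a j) :
    volume (coordBox a) = ENNReal.ofReal (∏ j, a j) := by
  simp only [coordBox, volume_setOf_forall_apply_mem, Real.volume_Icc, sub_zero]
  exact (ENNReal.ofReal_prod_of_nonneg fun j _ => ha j).symm

lemma volume_coordBox_inter_ball_le (a : Fin n → ℝ) (x : EuclideanSpace ℝ (Fin n)) (r : ℝ) :
    volume (coordBox a ∩ ball x r) ≤ ∏ j, ENNReal.ofReal (min (a j) (2 * r)) := by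
  calc volume (coordBox a ∩ ball x r)
      ≤ volume {z : EuclideanSpace ℝ (Fin n) |
          ∀ j, z j ∈ Set.Icc 0 (a j) ∩ Set.Icc (x j - r) (x j + r)} := by
        refine measure_mono fun z ⟨hz, hzx⟩ j => ⟨hz j, ?_⟩
        have := (PiLp.dist_apply_le z x j).trans (mem_ball.mp hzx).le
        rw [Real.dist_eq, abs_le] at this
        constructor <;> linarith
    _ = ∏ j, volume (Set.Icc 0 (a j) ∩ Set.Icc (x j - r) (x j + r)) :=
        volume_setOf_forall_apply_mem _
    _ ≤ ∏ j, ENNReal.ofReal (min (a j) (2 * r)) := by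
        gcongr with j
        rw [ENNReal.ofReal_min]
        refine le_min ((measure_mono Set.inter_subset_left).trans_eq ?_)
          ((measure_mono Set.inter_subset_right).trans_eq ?_)
        · rw [Real.volume_Icc, sub_zero]
        · rw [Real.volume_Icc]; ring_nf

lemma ball_subset_coordBox {a : Fin n → ℝ} {ρ : ℝ} (hρ : ∀ j, 2 * ρ ≤ a j) :
    ball (WithLp.toLp 2 fun j => a j / 2) ρ ⊆ coordBox a := by
  intro z hz j
  have := (PiLp.dist_apply_le z _ j).trans_lt (mem_ball.mp hz)
  rw [Real.dist_eq, abs_lt] at this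
  have := hρ j
  constructor <;> linarith

lemma coordBox_subset_ball {a : Fin n → ℝ} {M R : ℝ} (ha : ∀ j, a j ≤ M) (hR : 0 ≤ R)
    (hMR : n * M ^ 2 < R ^ 2) : coordBox a ⊆ ball 0 R := by
  intro z hz
  rw [mem_ball_zero_iff, ← pow_lt_pow_iff_left₀ (norm_nonneg z) hR two_ne_zero,
    EuclideanSpace.norm_sq_eq]
  calc ∑ j, ‖z j‖ ^ 2 ≤ ∑ _j : Fin n, M ^ 2 := by
        gcongr with j
        exact abs_le.mpr ⟨by linarith [(hz j).1, (hz j).2, ha j], (hz j).2.trans (ha j)⟩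
    _ = n * M ^ 2 := by simp
    _ < R ^ 2 := hMR

theorem morreyNorm_coordBox_le {α p : ℝ} (hp : 0 < p) {a : Fin n → ℝ} (ha : ∀ j, 0 ≤ a j)
    {t : Fin n → ℝ} (ht0 : ∀ j, 0 ≤ t j) (ht1 : ∀ j, t j ≤ 1) (hsum : ∑ j, t j = n - α * p) :
    morreyNorm n α p ((coordBox a).indicator fun _ => 1)
      ≤ ENNReal.ofReal ((2 ^ (n - α * p) * ∏ j, a j ^ (1 - t j)) ^ (1 / p)) := by
  have hP : 0 ≤ 2 ^ (n - α * p) * ∏ j, a j ^ (1 - t j) :=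
    mul_nonneg (by positivity) (Finset.prod_nonneg fun j _ => rpow_nonneg (ha j) _)
  refine morreyNorm_indicator_le hp (measurableSet_coordBox a) (by positivity) fun x r hr => ?_
  calc volume (coordBox a ∩ ball x r) ≤ ∏ j, ENNReal.ofReal (min (a j) (2 * r)) :=
        volume_coordBox_inter_ball_le a x r
    _ ≤ ∏ j, ENNReal.ofReal (a j ^ (1 - t j) * (2 * r) ^ t j) := by
        gcongr with j
        exact min_le_rpow_mul_rpow (ha j) (by positivity) (ht0 j) (ht1 j)
    _ = _ := by
        rw [← ENNReal.ofReal_prod_of_nonneg fun j _ =>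
            mul_nonneg (rpow_nonneg (ha j) _) (by positivity),
          Finset.prod_mul_distrib, ← rpow_sum_of_pos (by positivity), hsum,
          ← rpow_mul hP, one_div_mul_cancel hp.ne', Real.rpow_one, mul_rpow (by norm_num) hr.le]
        ring_nf

end CoordBox

section KnappTube

variable {n : ℕ} {α p δ : ℝ}

lemma inv_le_inv_sq_of_le_one (hδ₀ : 0 < δ) (hδ₁ : δ ≤ 1) : δ⁻¹ ≤ (δ ^ 2)⁻¹ :=
  inv_anti₀ (by positivity) (pow_le_of_le_one hδ₀.le hδ₁ two_ne_zero)

def knappTube (n : ℕ) (δ : ℝ) : Set (EuclideanSpace ℝ (Fin n)) :=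
  coordBox fun j => if (j : ℕ) < n - 1 then δ⁻¹ else (δ ^ 2)⁻¹

lemma setOf_eq_knappTube (hn : 1 ≤ n) (δ : ℝ) :
    {z : EuclideanSpace ℝ (Fin n) | (∀ j : Fin n, (j : ℕ) < n - 1 → z j ∈ Set.Icc 0 δ⁻¹) ∧
      z ⟨n - 1, by omega⟩ ∈ Set.Icc 0 (δ ^ 2)⁻¹} = knappTube n δ := by
  ext z
  simp only [knappTube, coordBox, Set.mem_ofPred_eq]
  constructor
  · rintro ⟨hlt, hlast⟩ j
    split_ifs with hj
    · exact hlt j hj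
    · rwa [show j = ⟨n - 1, by omega⟩ from Fin.ext (by simp only; omega)]
  · intro h
    refine ⟨fun j hj => by simpa [hj] using h j, by simpa using h ⟨n - 1, by omega⟩⟩

lemma prod_knappTube_sides_rpow (hn : 1 ≤ n) (hδ : 0 < δ) (u v : ℝ) : (∏ j : Fin n,
    (if (j : ℕ) < n - 1 then δ⁻¹ else (δ ^ 2)⁻¹) ^ (1 - if (j : ℕ) < n - 1 then u else v))
    = δ ^ (-((n - 1) * (1 - u) + 2 * (1 - v))) := by
  calc _ = ∏ j : Fin n, (if (j : ℕ) < n - 1 then δ⁻¹ ^ (1 - u) else (δ ^ 2)⁻¹ ^ (1 - v)) :=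
        Finset.prod_congr rfl fun j _ => by split_ifs <;> rfl
    _ = (δ⁻¹ ^ (1 - u)) ^ (n - 1) * (δ ^ 2)⁻¹ ^ (1 - v) := prod_ite_val_lt_sub_one hn _ _
    _ = _ := by
        rw [← Real.rpow_natCast, Nat.cast_sub hn, Nat.cast_one, ← rpow_mul (by positivity),
          inv_rpow hδ.le, inv_rpow (by positivity), ← Real.rpow_natCast δ 2, ← rpow_mul hδ.le,
          ← rpow_neg hδ.le, ← rpow_neg (by positivity), ← rpow_add hδ]
        ring_nf

lemma knappTube_sides_nonneg (hδ : 0 < δ) (j : Fin n) :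
    0 ≤ if (j : ℕ) < n - 1 then δ⁻¹ else (δ ^ 2)⁻¹ := by
  split_ifs <;> positivity

lemma measurableSet_knappTube (n : ℕ) (δ : ℝ) : MeasurableSet (knappTube n δ) :=
  measurableSet_coordBox _

lemma volume_knappTube (hn : 1 ≤ n) (hδ : 0 < δ) :
    volume (knappTube n δ) = ENNReal.ofReal (δ⁻¹ ^ (n - 1) * (δ ^ 2)⁻¹) := by
  rw [knappTube, volume_coordBox (knappTube_sides_nonneg hδ), prod_ite_val_lt_sub_one hn]

theorem morreyNorm_knappTube_le (hn : 1 ≤ n) (hp : 0 < p) (hδ : 0 < δ) {u v : ℝ} (hu0 : 0 ≤ u)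
    (hu1 : u ≤ 1) (hv0 : 0 ≤ v) (hv1 : v ≤ 1) (hsum : (n - 1) * u + v = n - α * p) :
    morreyNorm n α p ((knappTube n δ).indicator fun _ => 1)
      ≤ ENNReal.ofReal (2 ^ ((n - α * p) / p) * δ ^ (-((n - 1) * (1 - u) + 2 * (1 - v)) / p)) := by
  refine (morreyNorm_coordBox_le hp (knappTube_sides_nonneg hδ)
    (t := fun j => if (j : ℕ) < n - 1 then u else v) (fun j => by split_ifs <;> assumption)
    (fun j => by split_ifs <;> assumption) ?_).trans_eq ?_
  · rw [sum_ite_val_lt_sub_one hn, nsmul_eq_mul, Nat.cast_sub hn, Nat.cast_one, hsum]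
  · rw [prod_knappTube_sides_rpow hn hδ, mul_rpow (by positivity) (by positivity),
      ← Real.rpow_mul (by norm_num), ← Real.rpow_mul hδ.le]
    ring_nf

theorem morreyNorm_knappTube_le_of_mul_le (hn : 2 ≤ n) (hp : 0 < p) (hδ : 0 < δ) (hα : 0 ≤ α)
    (h : α * p ≤ n - 1) :
    morreyNorm n α p ((knappTube n δ).indicator fun _ => 1)
      ≤ ENNReal.ofReal (2 ^ ((n - α * p) / p) * δ ^ (-α)) := by
  have hn1 : (0 : ℝ) < n - 1 := by
    have : (2 : ℝ) ≤ n := by exact_mod_cast hn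
    linarith
  have hαp : 0 ≤ α * p := by positivity
  convert morreyNorm_knappTube_le (n := n) (α := α) (by omega) hp hδ
    (u := 1 - α * p / (n - 1)) (v := 1)
    (by rw [sub_nonneg, div_le_one hn1]; exact h) (by linarith [div_nonneg hαp hn1.le])
    zero_le_one le_rfl (by field_simp; ring) using 4
  field_simp
  ring

theorem morreyNorm_knappTube_le_of_le_mul (hn : 1 ≤ n) (hp : 0 < p) (hδ : 0 < δ)
    (h₁ : n - 1 ≤ α * p) (h₂ : α * p ≤ n) :
    morreyNorm n α p ((knappTube n δ).indicator fun _ => 1)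
      ≤ ENNReal.ofReal (2 ^ ((n - α * p) / p) * δ ^ (-(2 * α) + (n - 1) / p)) := by
  convert morreyNorm_knappTube_le (n := n) (α := α) hn hp hδ (u := 0) (v := n - α * p) le_rfl
    zero_le_one (by linarith) (by linarith) (by ring) using 4
  field_simp
  ring

theorem ofReal_le_morreyNorm_knappTube_of_ball (hp : 0 < p) (hδ₀ : 0 < δ) (hδ₁ : δ ≤ 1) :
    ENNReal.ofReal (2 ^ (-α) * (volume (ball (0 : EuclideanSpace ℝ (Fin n)) 1)).toReal ^ (1 / p)
      * δ ^ (-α)) ≤ morreyNorm n α p ((knappTube n δ).indicator fun _ => 1) := by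
  have hside := inv_le_inv_sq_of_le_one hδ₀ hδ₁
  convert ofReal_le_morreyNorm_indicator_of_ball_subset hp (measurableSet_knappTube n δ)
    (half_pos (inv_pos.mpr hδ₀))
    (ball_subset_coordBox fun j => by split_ifs <;> linarith) using 2
  rw [div_rpow (by positivity) zero_le_two, inv_rpow hδ₀.le, ← rpow_neg hδ₀.le,
    rpow_neg zero_le_two]
  ring

theorem ofReal_le_morreyNorm_knappTube_of_subset_ball (hn : 2 ≤ n) (hp : 0 < p) (hδ₀ : 0 < δ)
    (hδ₁ : δ ≤ 1) :
    ENNReal.ofReal ((n : ℝ) ^ (α - n / p) * δ ^ (-(2 * α) + (n - 1) / p))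
      ≤ morreyNorm n α p ((knappTube n δ).indicator fun _ => 1) := by
  have hn' : (2 : ℝ) ≤ n := by exact_mod_cast hn
  have hside := inv_le_inv_sq_of_le_one hδ₀ hδ₁
  have hsub : knappTube n δ ⊆ ball 0 (n * (δ ^ 2)⁻¹) :=
    coordBox_subset_ball (fun j => by split_ifs; exacts [hside, le_rfl]) (by positivity)
      (by rw [mul_pow]; gcongr; exact lt_self_pow₀ (by linarith) one_lt_two)
  convert ofReal_le_morreyNorm_indicator hp (measurableSet_knappTube n δ) 0
    (by positivity : 0 < (n : ℝ) * (δ ^ 2)⁻¹) (w := δ⁻¹ ^ (n - 1) * (δ ^ 2)⁻¹) (by positivity)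
    (by rw [Set.inter_eq_left.mpr hsub, volume_knappTube (by omega) hδ₀]) using 2
  have hδ2 : (δ ^ 2)⁻¹ = δ ^ (-2 : ℝ) := by
    rw [rpow_neg hδ₀.le, ← Real.rpow_natCast]; norm_num
  have hδn : δ⁻¹ ^ (n - 1) = δ ^ (-(n - 1 : ℝ)) := by
    rw [rpow_neg hδ₀.le, ← inv_rpow hδ₀.le, ← Real.rpow_natCast, Nat.cast_sub (by omega),
      Nat.cast_one]
  rw [hδ2, hδn, mul_rpow (x := (n : ℝ)) (by positivity) (by positivity), ← Real.rpow_mul hδ₀.le,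
    mul_assoc, ← rpow_add hδ₀, ← rpow_add hδ₀, mul_rpow (by positivity) (by positivity),
    ← Real.rpow_mul (by positivity), ← Real.rpow_mul hδ₀.le]
  congr 2 <;> field_simp
  ring

end KnappTube

/-- For the characteristic function `V` of the Knapp tube
`T = [0,δ⁻¹]^{n-1} × [0,δ⁻²]`, the Morrey–Campanato norm `‖V‖_{𝓛^{α,p}}` is comparable to
`δ^{-α}` if `1/p ≥ α/(n-1)` and to `δ^{-2α+(n-1)/p}` if `1/p ≤ α/(n-1)`, with constants
depending only on `n`, `α` and `p`. -/
theorem stmt17 (n : ℕ) (hn : 2 ≤ n) (α p : ℝ) (hα : 0 < α) (hp1 : 1 ≤ p)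
    (hp2 : p ≤ (n : ℝ) / α) :
    ∃ c C : ℝ, 0 < c ∧ 0 < C ∧
      ∀ δ : ℝ, 0 < δ → δ < 1 →
      ∀ V : EuclideanSpace ℝ (Fin n) → ℝ,
        V = Set.indicator {z : EuclideanSpace ℝ (Fin n) |
              (∀ j : Fin n, (j : ℕ) < n - 1 → z j ∈ Set.Icc (0 : ℝ) δ⁻¹) ∧
              z ⟨n - 1, by omega⟩ ∈ Set.Icc (0 : ℝ) (δ ^ 2)⁻¹}
            (fun _ => (1 : ℝ)) →
        ((α / ((n : ℝ) - 1) ≤ 1/p →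
            ENNReal.ofReal (c * δ ^ (-α)) ≤ morreyNorm n α p V ∧
              morreyNorm n α p V ≤ ENNReal.ofReal (C * δ ^ (-α))) ∧
         (1/p ≤ α / ((n : ℝ) - 1) →
            ENNReal.ofReal (c * δ ^ (-(2*α) + ((n : ℝ) - 1) / p)) ≤ morreyNorm n α p V ∧
              morreyNorm n α p V ≤ ENNReal.ofReal (C * δ ^ (-(2*α) + ((n : ℝ) - 1) / p)))) := by
  have hp : 0 < p := by linarith
  have hn₁ : (0 : ℝ) < n - 1 := by
    have : (2 : ℝ) ≤ n := by exact_mod_cast hn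
    linarith
  set ω := (volume (ball (0 : EuclideanSpace ℝ (Fin n)) 1)).toReal
  have hω : 0 < ω := ENNReal.toReal_pos (measure_ball_pos _ _ one_pos).ne' measure_ball_lt_top.ne
  refine ⟨min (2 ^ (-α) * ω ^ (1 / p)) ((n : ℝ) ^ (α - n / p)), 2 ^ ((n - α * p) / p),
    lt_min (by positivity) (by positivity), by positivity, ?_⟩
  rintro δ hδ₀ hδ₁ V rfl
  rw [setOf_eq_knappTube (by omega)]
  refine ⟨fun h => ⟨?_, ?_⟩, fun h => ⟨?_, ?_⟩⟩
  · refine le_trans (ENNReal.ofReal_le_ofReal ?_)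
      (ofReal_le_morreyNorm_knappTube_of_ball hp hδ₀ hδ₁.le)
    gcongr
    exact min_le_left _ _
  · refine morreyNorm_knappTube_le_of_mul_le hn hp hδ₀ hα.le ?_
    rwa [div_le_div_iff₀ hn₁ hp, one_mul] at h
  · refine le_trans (ENNReal.ofReal_le_ofReal ?_)
      (ofReal_le_morreyNorm_knappTube_of_subset_ball hn hp hδ₀ hδ₁.le)
    gcongr
    exact min_le_right _ _
  · refine morreyNorm_knappTube_le_of_le_mul (by omega) hp hδ₀ ?_ ?_
    · rwa [div_le_div_iff₀ hp hn₁, one_mul] at h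
    · rw [le_div_iff₀ hα] at hp2
      linarith
end
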